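/- (Tian-type bound) Let 𝔽 be a field, F ∈ ℕ divisible by 3, and let W be a finite-dimensional 𝔽-vector space containing nine linearly independent subspaces A₁, A₂, A₃, B₁, B₂, B₃, C₁, C₂, C₃, each of dimension F/3; set W₁ = A₁ + A₂ + A₃, W₂ = B₁ + B₂ + B₃, W₃ = C₁ + C₂ + C₃. Let Z₁, Z₂, Z₃ and X be subspaces of W such that for each i ∈ {1,2,3}, the subspace X + Z_i contains W_i, A_i, B_i and C_i. Let M, R' be rationals with dim(Z_i) ≤ M·F for all i and dim(X) = R'·F. Then 2R' + 3M ≥ 5. -/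

import Mathlib

/-!
Write `U p` for the nine pieces, each of dimension `n = F/3`, and `Y = X + A₂ + B₁`.
Both `A₂` and `B₁` are decodable by users 1 and 2, so `Y ≤ (X + Z₁) ∩ (X + Z₂)`, while
`(X + Z₁) + (X + Z₂)` contains eight pieces. Modularity of `finrank` gives
`dim(X + Z₁) + dim(X + Z₂) ≥ 8n + dim Y`. Similarly `X ≤ Y ∩ (X + Z₃)` and `Y + (X + Z₃)`
contains seven pieces, so `dim Y + dim(X + Z₃) ≥ 7n + dim X`. Adding up and bounding
`dim(X + Zᵢ) ≤ dim X + dim Zᵢ` yields `2 dim X + Σ dim Zᵢ ≥ 15n = 5F`.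
-/

open Module

/-- A finite family of subspaces is linearly independent: whenever a sum of elements,
one from each subspace, is zero, every term is zero. -/
def SubspacesIndep {𝔽 V : Type*} [Field 𝔽] [AddCommGroup V] [Module 𝔽 V]
    {ι : Type*} [Fintype ι] (Us : ι → Submodule 𝔽 V) : Prop :=
  ∀ v : ι → V, (∀ i, v i ∈ Us i) → ∑ i, v i = 0 → ∀ i, v i = 0

section

variable {𝔽 V : Type*} [Field 𝔽] [AddCommGroup V] [Module 𝔽 V] {ι : Type*}

theorem SubspacesIndep.iSupIndep [Fintype ι] {Us : ι → Submodule 𝔽 V}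
    (h : SubspacesIndep Us) : iSupIndep Us := by
  classical
  apply iSupIndep_of_dfinsupp_lsum_injective
  rw [← LinearMap.ker_eq_bot, LinearMap.ker_eq_bot']
  intro v hv
  have hsum : ∑ i, (v i : V) = 0 := by
    rw [DFinsupp.lsum_apply_apply, DFinsupp.sumAddHom_apply,
      DFinsupp.sum_eq_sum_fintype _ fun i => rfl] at hv
    simpa using hv
  ext i
  simpa using h (fun i => (v i : V)) (fun i => (v i).2) hsum i

variable [FiniteDimensional 𝔽 V]

theorem iSupIndep.finrank_biSup [DecidableEq ι] {Us : ι → Submodule 𝔽 V}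
    (h : iSupIndep Us) (s : Finset ι) :
    finrank 𝔽 ↥(⨆ i ∈ s, Us i) = ∑ i ∈ s, finrank 𝔽 ↥(Us i) := by
  induction s using Finset.induction with
  | empty => simp
  | @insert a s ha ih =>
    have hd : Disjoint (Us a) (⨆ i ∈ s, Us i) := by
      simpa using h.disjoint_biSup (y := (↑s : Set ι)) (by simpa using ha)
    rw [Finset.sum_insert ha, ← ih, Finset.iSup_insert,
      ← Submodule.finrank_sup_add_finrank_inf_eq, hd.eq_bot, finrank_bot, add_zero]

theorem iSupIndep.card_mul_le_finrank {Us : ι → Submodule 𝔽 V} (h : iSupIndep Us)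
    {s : Finset ι} {n : ℕ} (hn : ∀ i ∈ s, finrank 𝔽 ↥(Us i) = n)
    {T : Submodule 𝔽 V} (hT : ∀ i ∈ s, Us i ≤ T) :
    s.card * n ≤ finrank 𝔽 ↥T := by
  classical
  calc s.card * n = ∑ i ∈ s, finrank 𝔽 ↥(Us i) := by
        rw [Finset.sum_congr rfl hn, Finset.sum_const, smul_eq_mul]
    _ = finrank 𝔽 ↥(⨆ i ∈ s, Us i) := (h.finrank_biSup s).symm
    _ ≤ finrank 𝔽 ↥T := Submodule.finrank_mono (iSup₂_le hT)

theorem Submodule.finrank_sup_add_finrank_le_of_le_inf {S U U' : Submodule 𝔽 V}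
    (hS : S ≤ U ⊓ U') : finrank 𝔽 ↥(U ⊔ U') + finrank 𝔽 ↥S ≤ finrank 𝔽 ↥U + finrank 𝔽 ↥U' :=
  Submodule.finrank_sup_add_finrank_inf_eq U U' ▸
    Nat.add_le_add_left (Submodule.finrank_mono hS) _

/-- Piece `(i, j)` is part `j` of document `i`; user `k` decodes document `k` in full and
part `k` of every document. -/
theorem two_finrank_add_sum_finrank_ge {U : Fin 3 × Fin 3 → Submodule 𝔽 V} (hU : iSupIndep U)
    {n : ℕ} (hn : ∀ p, finrank 𝔽 ↥(U p) = n) (X : Submodule 𝔽 V) (Z : Fin 3 → Submodule 𝔽 V)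
    (hdecode : ∀ p k, (p.1 = k ∨ p.2 = k) → U p ≤ X ⊔ Z k) :
    15 * n ≤ 2 * finrank 𝔽 ↥X + ∑ k, finrank 𝔽 ↥(Z k) := by
  set Y := X ⊔ U (0, 1) ⊔ U (1, 0)
  have hY : Y ≤ (X ⊔ Z 0) ⊓ (X ⊔ Z 1) :=
    le_inf (sup_le (sup_le le_sup_left (hdecode _ _ (.inl rfl))) (hdecode _ _ (.inr rfl)))
      (sup_le (sup_le le_sup_left (hdecode _ _ (.inr rfl))) (hdecode _ _ (.inl rfl)))
  have h8 : 8 * n ≤ finrank 𝔽 ↥((X ⊔ Z 0) ⊔ (X ⊔ Z 1)) := by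
    have hcover : ∀ p : Fin 3 × Fin 3, p ≠ (2, 2) →
        (p.1 = 0 ∨ p.2 = 0) ∨ (p.1 = 1 ∨ p.2 = 1) := by decide
    refine hU.card_mul_le_finrank (s := {(2, 2)}ᶜ) (fun p _ => hn p) fun p hp => ?_
    rcases hcover p (by simpa using hp) with h | h
    · exact (hdecode p 0 h).trans le_sup_left
    · exact (hdecode p 1 h).trans le_sup_right
  have h7 : 7 * n ≤ finrank 𝔽 ↥(Y ⊔ (X ⊔ Z 2)) := by
    have hcover : ∀ p : Fin 3 × Fin 3, p ≠ (0, 0) → p ≠ (1, 1) →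
        p = (0, 1) ∨ p = (1, 0) ∨ (p.1 = 2 ∨ p.2 = 2) := by decide
    refine hU.card_mul_le_finrank (s := {(0, 0), (1, 1)}ᶜ) (fun p _ => hn p) fun p hp => ?_
    simp only [Finset.mem_compl, Finset.mem_insert, Finset.mem_singleton, not_or] at hp
    rcases hcover p hp.1 hp.2 with rfl | rfl | h
    · exact le_sup_of_le_left (le_sup_of_le_left le_sup_right)
    · exact le_sup_of_le_left le_sup_right
    · exact (hdecode p 2 h).trans le_sup_right
  have hXY : X ≤ Y ⊓ (X ⊔ Z 2) := le_inf (le_sup_of_le_left le_sup_left) le_sup_left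
  have h01 := Submodule.finrank_sup_add_finrank_le_of_le_inf hY
  have h2 := Submodule.finrank_sup_add_finrank_le_of_le_inf hXY
  have hZ := fun k => Submodule.finrank_add_le_finrank_add_finrank X (Z k)
  simp only [Fin.sum_univ_three]
  linarith [hZ 0, hZ 1, hZ 2]

end

/-- **Tian-type bound.** Let `F > 0` be divisible by 3 and let `W` be a
finite-dimensional `𝔽`-vector space containing nine linearly independent subspaces
`A₁, A₂, A₃, B₁, B₂, B₃, C₁, C₂, C₃`, each of dimension `F/3`; set
`W₁ = A₁ + A₂ + A₃`, `W₂ = B₁ + B₂ + B₃`, `W₃ = C₁ + C₂ + C₃`. Let `Z₁, Z₂, Z₃, X` be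
subspaces of `W` such that for each `i`, `X + Z_i` contains `W_i`, `A_i`, `B_i`, `C_i`.
If `dim Z_i ≤ M·F` for all `i` and `dim X = R'·F`, then `2R' + 3M ≥ 5`. -/
theorem tian_type_bound {𝔽 W : Type*} [Field 𝔽] [AddCommGroup W] [Module 𝔽 W]
    [FiniteDimensional 𝔽 W] (F : ℕ) (hF : 0 < F) (hF3 : 3 ∣ F)
    (A B C : Fin 3 → Submodule 𝔽 W)
    (hindep : SubspacesIndep (fun p : Fin 3 × Fin 3 => ![A, B, C] p.1 p.2))
    (hdimA : ∀ i, Module.finrank 𝔽 ↥(A i) = F / 3)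
    (hdimB : ∀ i, Module.finrank 𝔽 ↥(B i) = F / 3)
    (hdimC : ∀ i, Module.finrank 𝔽 ↥(C i) = F / 3)
    (Z : Fin 3 → Submodule 𝔽 W) (X : Submodule 𝔽 W)
    (hdecode : ∀ i : Fin 3,
      (![⨆ j, A j, ⨆ j, B j, ⨆ j, C j] : Fin 3 → Submodule 𝔽 W) i ≤ X ⊔ Z i ∧
      A i ≤ X ⊔ Z i ∧ B i ≤ X ⊔ Z i ∧ C i ≤ X ⊔ Z i)
    (M R' : ℚ)
    (hM : ∀ i, (Module.finrank 𝔽 ↥(Z i) : ℚ) ≤ M * F)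
    (hR : (Module.finrank 𝔽 ↥X : ℚ) = R' * F) :
    2 * R' + 3 * M ≥ 5 := by
  have hdim : ∀ p : Fin 3 × Fin 3, finrank 𝔽 ↥(![A, B, C] p.1 p.2) = F / 3 := by
    rintro ⟨i, j⟩
    fin_cases i
    exacts [hdimA j, hdimB j, hdimC j]
  have hdecode' : ∀ (p : Fin 3 × Fin 3) k, (p.1 = k ∨ p.2 = k) →
      ![A, B, C] p.1 p.2 ≤ X ⊔ Z k := by
    rintro ⟨i, j⟩ k (rfl | rfl)
    · refine le_trans ?_ (hdecode i).1
      fin_cases i <;> exact le_iSup _ j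
    · fin_cases i
      exacts [(hdecode j).2.1, (hdecode j).2.2.1, (hdecode j).2.2.2]
  have hbound := two_finrank_add_sum_finrank_ge hindep.iSupIndep hdim X Z hdecode'
  have hF15 : (5 * F : ℚ) = 15 * (F / 3 : ℕ) := by
    rw [Nat.cast_div hF3 (by norm_num)]; ring
  have hFpos : (0 : ℚ) < F := by exact_mod_cast hF
  have hq : (5 * F : ℚ) ≤ 2 * finrank 𝔽 ↥X + ∑ k, (finrank 𝔽 ↥(Z k) : ℚ) := by
    rw [hF15]; exact_mod_cast hbound
  rw [Fin.sum_univ_three] at hq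
  nlinarith [hM 0, hM 1, hM 2]
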